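/- Let H be the integer Heisenberg group, let { q_i : i ≥ 1 } be an infinite sequence of distinct primes, and for ℓ ≥ 1 set M_ℓ = q₁q₂⋯q_ℓ and N_ℓ = q₁²q₂²⋯q_ℓ². Let H_ℓ = { (aM_ℓ, bN_ℓ, cN_ℓ) : a, b, c ∈ ℤ } ⊂ H. Then each H_ℓ is a finite-index subgroup of H with H_{ℓ+1} ⊂ H_ℓ and ⋂_ℓ H_ℓ = {e}, the normal core of H_ℓ in H is C_ℓ = { (aN_ℓ, bN_ℓ, cN_ℓ) : a, b, c ∈ ℤ }, and the natural left action of H on the inverse limit X_∞ = lim← H/H_ℓ (with bonding maps induced by the inclusions H_{ℓ+1} ⊂ H_ℓ) is a minimal equicontinuous Cantor action that is topologically free and wild. -/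

import Mathlib

noncomputable section

open Set Topology

/-! ### The group of homeomorphisms -/

namespace Homeomorph

variable {X : Type*} [TopologicalSpace X]

instance instGroup' : Group (X ≃ₜ X) where
  mul f g := g.trans f
  one := Homeomorph.refl X
  inv := Homeomorph.symm
  mul_assoc f g h := rfl
  one_mul f := rfl
  mul_one f := rfl
  inv_mul_cancel f := Homeomorph.ext fun x => f.symm_apply_apply x

@[simp] theorem mul_apply' (f g : X ≃ₜ X) (x : X) : (f * g) x = f (g x) := rfl
@[simp] theorem one_apply' (x : X) : (1 : X ≃ₜ X) x = x := rfl
@[simp] theorem inv_eq_symm (f : X ≃ₜ X) : f⁻¹ = f.symm := rfl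

/-- The uniform topology (topology of uniform convergence, equivalently for a compact
metric space the compact-open topology) on the group of homeomorphisms of a compact
metric space, as the metric topology of the sup-metric. -/
instance instMetricSpaceHomeomorph {Y : Type*} [MetricSpace Y] [CompactSpace Y] :
    MetricSpace (Y ≃ₜ Y) :=
  MetricSpace.induced (fun h => (⟨h, h.continuous⟩ : C(Y, Y)))
    (fun f g hfg => Homeomorph.ext fun x => congrFun (congrArg ContinuousMap.toFun hfg) x)
    inferInstance

end Homeomorph

namespace Homeomorph

variable {Y : Type*} [MetricSpace Y] [CompactSpace Y]

theorem dist_eq_contMap (f g : Y ≃ₜ Y) :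
    dist f g = dist (⟨f, f.continuous⟩ : C(Y, Y)) (⟨g, g.continuous⟩ : C(Y, Y)) := rfl

theorem dist_apply_le (f g : Y ≃ₜ Y) (x : Y) : dist (f x) (g x) ≤ dist f g :=
  ContinuousMap.dist_apply_le_dist (f := (⟨f, f.continuous⟩ : C(Y, Y)))
    (g := (⟨g, g.continuous⟩ : C(Y, Y))) x

theorem dist_lt_iff' (f g : Y ≃ₜ Y) {C : ℝ} (hC : 0 < C) :
    dist f g < C ↔ ∀ x : Y, dist (f x) (g x) < C := by
  rw [dist_eq_contMap, ContinuousMap.dist_lt_iff hC]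
  rfl

instance : IsTopologicalGroup (Y ≃ₜ Y) where
  continuous_mul := by
    rw [Metric.continuous_iff]
    rintro ⟨f₀, g₀⟩ ε hε
    obtain ⟨δ₁, hδ₁, H₁⟩ := Metric.uniformContinuous_iff.mp
      (CompactSpace.uniformContinuous_of_continuous f₀.continuous) (ε / 2) (by positivity)
    refine ⟨min δ₁ (ε / 2), by positivity, ?_⟩
    rintro ⟨f, g⟩ hd
    have hdf : dist f f₀ < ε / 2 := by
      have h' : dist f f₀ ≤ dist ((f, g)) ((f₀, g₀)) := by
        rw [Prod.dist_eq]; exact le_max_left _ _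
      exact (h'.trans_lt hd).trans_le (min_le_right _ _)
    have hdg : dist g g₀ < δ₁ := by
      have h' : dist g g₀ ≤ dist ((f, g)) ((f₀, g₀)) := by
        rw [Prod.dist_eq]; exact le_max_right _ _
      exact (h'.trans_lt hd).trans_le (min_le_left _ _)
    rw [dist_lt_iff' _ _ hε]
    intro x
    have h1 : dist (f (g x)) (f₀ (g x)) < ε / 2 :=
      lt_of_le_of_lt (dist_apply_le f f₀ (g x)) hdf
    have h2 : dist (f₀ (g x)) (f₀ (g₀ x)) < ε / 2 :=
      H₁ (lt_of_le_of_lt (dist_apply_le g g₀ x) hdg)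
    calc dist ((f * g) x) ((f₀ * g₀) x) ≤ dist (f (g x)) (f₀ (g x)) + dist (f₀ (g x)) (f₀ (g₀ x)) :=
          dist_triangle _ _ _
      _ < ε / 2 + ε / 2 := by exact add_lt_add h1 h2
      _ = ε := by ring
  continuous_inv := by
    rw [Metric.continuous_iff]
    intro f₀ ε hε
    obtain ⟨δ, hδ, H⟩ := Metric.uniformContinuous_iff.mp
      (CompactSpace.uniformContinuous_of_continuous f₀.symm.continuous) ε hε
    refine ⟨δ, hδ, ?_⟩
    intro g hdg
    rw [dist_lt_iff' _ _ hε]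
    intro y
    have key : dist (g (g.symm y)) (f₀ (g.symm y)) < δ :=
      lt_of_le_of_lt (dist_apply_le g f₀ (g.symm y)) hdg
    have h2 := H key
    have h3 : dist (f₀.symm (g (g.symm y))) (f₀.symm (f₀ (g.symm y))) < ε := h2
    rw [Homeomorph.apply_symm_apply, Homeomorph.symm_apply_apply] at h3
    rw [dist_comm] at h3
    simpa using h3
end Homeomorph

/-! ### Steinitz (supernatural) numbers -/

/-- A Steinitz number: a formal product of primes with exponents in `ℕ∞`. -/
def SteinitzNum : Type := Nat.Primes → ℕ∞

namespace SteinitzNum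

/-- The Steinitz number associated to a natural number. -/
def ofNat (n : ℕ) : SteinitzNum := fun p => (n.factorization (p : ℕ) : ℕ∞)

/-- Multiplication of Steinitz numbers adds the exponents at each prime. -/
instance : Mul SteinitzNum := ⟨fun a b p => a p + b p⟩

/-- The least common multiple of a collection of positive integers, as a Steinitz number:
its exponent at `p` is the supremum of the `p`-adic valuations of the elements. -/
def lcmSet (S : Set ℕ) : SteinitzNum := fun p => ⨆ n ∈ S, (n.factorization (p : ℕ) : ℕ∞)

/-- Two Steinitz numbers are asymptotically equivalent if they agree after multiplication
by positive integers. -/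
def AsympEquiv (a b : SteinitzNum) : Prop :=
  ∃ n₀ m₀ : ℕ, 0 < n₀ ∧ 0 < m₀ ∧ ofNat n₀ * a = ofNat m₀ * b

/-- The prime spectrum of a Steinitz number: primes with nonzero exponent. -/
def primeSpectrum (a : SteinitzNum) : Set Nat.Primes := { p | a p ≠ 0 }

/-- The finite prime spectrum: primes with finite nonzero exponent. -/
def finitePrimeSpectrum (a : SteinitzNum) : Set Nat.Primes := { p | a p ≠ 0 ∧ a p ≠ ⊤ }

/-- The infinite prime spectrum: primes with infinite exponent. -/
def infinitePrimeSpectrum (a : SteinitzNum) : Set Nat.Primes := { p | a p = ⊤ }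

end SteinitzNum

/-! ### Steinitz orders for topological groups -/

/-- The Steinitz order of a topological group: the LCM of the orders of the finite
quotients `G/N` over open normal subgroups `N ⊆ G`. -/
def steinitzOrder (G : Type*) [Group G] [TopologicalSpace G] : SteinitzNum :=
  SteinitzNum.lcmSet
    { n | ∃ N : Subgroup G, N.Normal ∧ IsOpen (N : Set G) ∧ n = Nat.card (G ⧸ N) }

/-- The Steinitz order of a subgroup `D` of a topological group `G`: the LCM of the
cardinalities `|D/(N ∩ D)|` over open normal subgroups `N ⊆ G`. -/
def steinitzOrderOfSubgroup {G : Type*} [Group G] [TopologicalSpace G] (D : Subgroup G) :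
    SteinitzNum :=
  SteinitzNum.lcmSet
    { n | ∃ N : Subgroup G, N.Normal ∧ IsOpen (N : Set G) ∧
        n = Nat.card (↥D ⧸ (N.subgroupOf D)) }

/-- The relative Steinitz order of a subgroup `D` of a topological group `G`: the LCM of the
cardinalities `|G/(N · D)|` over open normal subgroups `N ⊆ G`. -/
def steinitzRelativeOrder {G : Type*} [Group G] [TopologicalSpace G] (D : Subgroup G) :
    SteinitzNum :=
  SteinitzNum.lcmSet
    { n | ∃ N : Subgroup G, N.Normal ∧ IsOpen (N : Set G) ∧ n = Nat.card (G ⧸ (N ⊔ D)) }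

/-- A profinite (compact Hausdorff totally disconnected) topological group is topologically
Noetherian if every increasing chain of closed subgroups has a maximal element. -/
def TopologicallyNoetherian (G : Type*) [Group G] [TopologicalSpace G] : Prop :=
  ∀ c : ℕ → Subgroup G, (∀ i, IsClosed (c i : Set G)) → Monotone c → ∃ i₀, ∀ i, c i ≤ c i₀

/-! ### Cantor actions -/

section CantorActions

variable {X : Type*} [MetricSpace X] {Γ : Type*} [Group Γ]

/-- An action is minimal if every orbit is dense. -/
def IsMinimalAction (Φ : Γ →* (X ≃ₜ X)) : Prop :=
  ∀ x : X, Dense (Set.range fun g : Γ => Φ g x)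

/-- An action is equicontinuous if it satisfies the uniform `ε`-`δ` condition with respect
to the metric. -/
def IsEquicontinuousAction (Φ : Γ →* (X ≃ₜ X)) : Prop :=
  ∀ ε : ℝ, 0 < ε → ∃ δ : ℝ, 0 < δ ∧
    ∀ x y : X, dist x y < δ → ∀ g : Γ, dist (Φ g x) (Φ g y) < ε

variable [CompactSpace X]

/-- `G(Φ)`: the closure of the image of `Γ` in `Homeo(X)`, in the uniform topology. -/
def profiniteClosure (Φ : Γ →* (X ≃ₜ X)) : Subgroup (X ≃ₜ X) :=
  Φ.range.topologicalClosure

/-- The discriminant group: the isotropy subgroup of `G(Φ)` at `x`. -/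
def discriminant (Φ : Γ →* (X ≃ₜ X)) (x : X) : Subgroup (profiniteClosure Φ) where
  carrier := { h | (h : X ≃ₜ X) x = x }
  one_mem' := rfl
  mul_mem' := by
    intro a b ha hb
    simp only [Set.mem_setOf_eq] at *
    show ((a : X ≃ₜ X) * (b : X ≃ₜ X)) x = x
    rw [Homeomorph.mul_apply', hb, ha]
  inv_mem' := by
    intro a ha
    simp only [Set.mem_setOf_eq] at *
    show ((a : X ≃ₜ X)⁻¹) x = x
    rw [Homeomorph.inv_eq_symm]
    conv_lhs => rw [← ha]
    exact Homeomorph.symm_apply_apply _ _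

/-- The Steinitz order `Π[G(Φ)]` of a Cantor action. -/
def steinitzOrderAction (Φ : Γ →* (X ≃ₜ X)) : SteinitzNum :=
  steinitzOrder ↥(profiniteClosure Φ)

/-- The Steinitz order `Π[D(Φ,x)]` of the discriminant of a Cantor action. -/
def steinitzOrderDisc (Φ : Γ →* (X ≃ₜ X)) (x : X) : SteinitzNum :=
  steinitzOrderOfSubgroup (discriminant Φ x)

/-- The relative Steinitz order `Π[G(Φ) : D(Φ,x)]` of a Cantor action. -/
def steinitzOrderRel (Φ : Γ →* (X ≃ₜ X)) (x : X) : SteinitzNum :=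
  steinitzRelativeOrder (discriminant Φ x)

end CantorActions

/-! ### Adapted sets, holonomy and return equivalence -/

section Adapted

variable {X : Type*} [MetricSpace X] {Γ : Type*} [Group Γ]

/-- A nonempty clopen subset `U ⊆ X` is adapted to the action `Φ` if every group element
either fixes `U` or moves it entirely off of itself. -/
def IsAdaptedSet (Φ : Γ →* (X ≃ₜ X)) (U : Set X) : Prop :=
  U.Nonempty ∧ IsClopen U ∧ ∀ g : Γ, ((Φ g) '' U ∩ U).Nonempty → (Φ g) '' U = U

/-- The stabilizer subgroup `Γ_U` of an adapted set. -/
def adaptedStabilizer (Φ : Γ →* (X ≃ₜ X)) (U : Set X) : Subgroup Γ where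
  carrier := { g | (Φ g) '' U = U }
  one_mem' := by ext x; simp
  mul_mem' := by
    intro a b ha hb
    simp only [Set.mem_setOf_eq] at *
    rw [map_mul]
    show ((Φ a) * (Φ b)) '' U = U
    have : (((Φ a) * (Φ b) : X ≃ₜ X) : X → X) = (Φ a) ∘ (Φ b) := rfl
    rw [this, Set.image_comp, hb, ha]
  inv_mem' := by
    intro a ha
    simp only [Set.mem_setOf_eq] at *
    rw [map_inv, Homeomorph.inv_eq_symm]
    conv_lhs => rw [← ha]
    rw [← Set.image_comp]
    simp

/-- The homeomorphism of an invariant set induced by a homeomorphism of `X`. -/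
def restrictHomeo (h : X ≃ₜ X) {U : Set X} (hU : h '' U = U) : U ≃ₜ U :=
  (h.image U).trans (Homeomorph.setCongr hU)

@[simp] theorem restrictHomeo_coe (h : X ≃ₜ X) {U : Set X} (hU : h '' U = U) (x : U) :
    (restrictHomeo h hU x : X) = h x := rfl

/-- The holonomy homomorphism of an adapted set: restriction of the stabilizer to `U`. -/
def holonomyHom (Φ : Γ →* (X ≃ₜ X)) (U : Set X) :
    adaptedStabilizer Φ U →* (↥U ≃ₜ ↥U) where
  toFun g := restrictHomeo (Φ (g : Γ)) g.2
  map_one' := by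
    ext x
    show ((restrictHomeo (Φ ((1 : adaptedStabilizer Φ U) : Γ)) _ x : X) = _)
    simp
  map_mul' := by
    intro a b
    ext x
    show ((restrictHomeo (Φ ((a * b : adaptedStabilizer Φ U) : Γ)) _ x : X) = _)
    simp only [restrictHomeo_coe, Subgroup.coe_mul, map_mul]
    rfl

/-- The holonomy group `H_U` of an adapted set: the image of the stabilizer in `Homeo(U)`. -/
def holonomyGroup (Φ : Γ →* (X ≃ₜ X)) (U : Set X) : Subgroup (↥U ≃ₜ ↥U) :=
  (holonomyHom Φ U).range

end Adapted

/-- Two Cantor actions are return equivalent if they admit adapted sets whose holonomy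
actions are isomorphic, via a homeomorphism between the adapted sets together with a
compatible isomorphism of the holonomy groups. -/
def ReturnEquivalent
    {X₁ : Type*} [MetricSpace X₁] {Γ₁ : Type*} [Group Γ₁]
    {X₂ : Type*} [MetricSpace X₂] {Γ₂ : Type*} [Group Γ₂]
    (Φ₁ : Γ₁ →* (X₁ ≃ₜ X₁)) (Φ₂ : Γ₂ →* (X₂ ≃ₜ X₂)) : Prop :=
  ∃ (U₁ : Set X₁) (U₂ : Set X₂), IsAdaptedSet Φ₁ U₁ ∧ IsAdaptedSet Φ₂ U₂ ∧
    ∃ (h : ↥U₁ ≃ₜ ↥U₂) (θ : holonomyGroup Φ₁ U₁ ≃* holonomyGroup Φ₂ U₂),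
      ∀ k : holonomyGroup Φ₁ U₁,
        ((θ k : ↥U₂ ≃ₜ ↥U₂)) = h.symm.trans (((k : ↥U₁ ≃ₜ ↥U₁)).trans h)

section Regularity

variable {X : Type*} [MetricSpace X]

/-- An action of a group `H` on `X` through a homomorphism `ρ : H →* Homeo(X)` is locally
quasi-analytic if there is `ε > 0` so that for every nonempty open `U` of diameter less
than `ε`, any element acting as the identity on a nonempty open subset `V ⊆ U` with
`ρ g (V) = V` acts as the identity on all of `U`. -/
def IsLocallyQuasiAnalytic {H : Type*} [Group H] (ρ : H →* (X ≃ₜ X)) : Prop :=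
  ∃ ε : ℝ, 0 < ε ∧ ∀ U : Set X, IsOpen U → U.Nonempty → Metric.diam U < ε →
    ∀ V : Set X, V ⊆ U → IsOpen V → V.Nonempty →
      ∀ g : H, (ρ g) '' V = V → (∀ x ∈ V, ρ g x = x) → ∀ x ∈ U, ρ g x = x

variable [CompactSpace X] {Γ : Type*} [Group Γ]

/-- A Cantor action is stable if the induced action of `G(Φ)` on `X` is locally
quasi-analytic; otherwise it is wild. -/
def IsStableAction (Φ : Γ →* (X ≃ₜ X)) : Prop :=
  IsLocallyQuasiAnalytic (profiniteClosure Φ).subtype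

/-- An action is topologically free if the set of points fixed by some nontrivial group
element is meagre. -/
def IsTopologicallyFree (Φ : Γ →* (X ≃ₜ X)) : Prop :=
  IsMeagre { x : X | ∃ g : Γ, g ≠ 1 ∧ Φ g x = x }

end Regularity

/-! ### The integer Heisenberg group -/

/-- The integer Heisenberg group: `ℤ³` with the multiplication
`(a,b,c)·(a',b',c') = (a+a', b+b', c+c'+ab')`. -/
@[ext] structure Heisenberg where
  a : ℤ
  b : ℤ
  c : ℤ

namespace Heisenberg

instance : Mul Heisenberg :=
  ⟨fun x y => ⟨x.a + y.a, x.b + y.b, x.c + y.c + x.a * y.b⟩⟩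

instance : One Heisenberg := ⟨⟨0, 0, 0⟩⟩

instance : Inv Heisenberg := ⟨fun x => ⟨-x.a, -x.b, -x.c + x.a * x.b⟩⟩

@[simp] theorem mul_a (x y : Heisenberg) : (x * y).a = x.a + y.a := rfl
@[simp] theorem mul_b (x y : Heisenberg) : (x * y).b = x.b + y.b := rfl
@[simp] theorem mul_c (x y : Heisenberg) : (x * y).c = x.c + y.c + x.a * y.b := rfl
@[simp] theorem one_a : (1 : Heisenberg).a = 0 := rfl
@[simp] theorem one_b : (1 : Heisenberg).b = 0 := rfl
@[simp] theorem one_c : (1 : Heisenberg).c = 0 := rfl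
@[simp] theorem inv_a (x : Heisenberg) : x⁻¹.a = -x.a := rfl
@[simp] theorem inv_b (x : Heisenberg) : x⁻¹.b = -x.b := rfl
@[simp] theorem inv_c (x : Heisenberg) : x⁻¹.c = -x.c + x.a * x.b := rfl

instance : Group Heisenberg where
  mul := (· * ·)
  one := 1
  inv := (·⁻¹)
  mul_assoc x y z := by ext <;> simp <;> ring
  one_mul x := by ext <;> simp
  mul_one x := by ext <;> simp
  inv_mul_cancel x := by ext <;> simp

instance : Countable Heisenberg :=
  Function.Injective.countable (f := fun x : Heisenberg => (x.a, x.b, x.c))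
    (by
      intro x y h
      injection h with h1 h2
      injection h2 with h3 h4
      ext <;> assumption)

end Heisenberg

/-! ### The Heisenberg group chain and its inverse limit space -/

/-- `M_ℓ = q₀ q₁ ⋯ q_ℓ`. -/
def heisM (q : ℕ → ℕ) (ℓ : ℕ) : ℤ := ∏ i ∈ Finset.range (ℓ + 1), (q i : ℤ)

/-- `N_ℓ = q₀² q₁² ⋯ q_ℓ²`. -/
def heisN (q : ℕ → ℕ) (ℓ : ℕ) : ℤ := ∏ i ∈ Finset.range (ℓ + 1), (q i : ℤ) ^ 2

/-- The subgroup `H_ℓ = {(a M_ℓ, b N_ℓ, c N_ℓ) : a, b, c ∈ ℤ}` of the Heisenberg group. -/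
def heisSub (q : ℕ → ℕ) (ℓ : ℕ) : Subgroup Heisenberg where
  carrier := { x | heisM q ℓ ∣ x.a ∧ heisN q ℓ ∣ x.b ∧ heisN q ℓ ∣ x.c }
  one_mem' := by
    refine ⟨?_, ?_, ?_⟩ <;> simp
  mul_mem' := by
    rintro x y ⟨hxa, hxb, hxc⟩ ⟨hya, hyb, hyc⟩
    refine ⟨?_, ?_, ?_⟩
    · rw [Heisenberg.mul_a]; exact dvd_add hxa hya
    · rw [Heisenberg.mul_b]; exact dvd_add hxb hyb
    · rw [Heisenberg.mul_c]; exact dvd_add (dvd_add hxc hyc) (hyb.mul_left _)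
  inv_mem' := by
    rintro x ⟨ha, hb, hc⟩
    refine ⟨?_, ?_, ?_⟩
    · rw [Heisenberg.inv_a]; exact dvd_neg.mpr ha
    · rw [Heisenberg.inv_b]; exact dvd_neg.mpr hb
    · rw [Heisenberg.inv_c]; exact dvd_add (dvd_neg.mpr hc) (hb.mul_left _)

theorem mem_heisSub {q : ℕ → ℕ} {ℓ : ℕ} {x : Heisenberg} :
    x ∈ heisSub q ℓ ↔ heisM q ℓ ∣ x.a ∧ heisN q ℓ ∣ x.b ∧ heisN q ℓ ∣ x.c := Iff.rfl

/-- The subgroup `C_ℓ = {(a N_ℓ, b N_ℓ, c N_ℓ) : a, b, c ∈ ℤ}` of the Heisenberg group. -/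
def heisCore (q : ℕ → ℕ) (ℓ : ℕ) : Subgroup Heisenberg where
  carrier := { x | heisN q ℓ ∣ x.a ∧ heisN q ℓ ∣ x.b ∧ heisN q ℓ ∣ x.c }
  one_mem' := by
    refine ⟨?_, ?_, ?_⟩ <;> simp
  mul_mem' := by
    rintro x y ⟨hxa, hxb, hxc⟩ ⟨hya, hyb, hyc⟩
    refine ⟨?_, ?_, ?_⟩
    · rw [Heisenberg.mul_a]; exact dvd_add hxa hya
    · rw [Heisenberg.mul_b]; exact dvd_add hxb hyb
    · rw [Heisenberg.mul_c]; exact dvd_add (dvd_add hxc hyc) (hyb.mul_left _)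
  inv_mem' := by
    rintro x ⟨ha, hb, hc⟩
    refine ⟨?_, ?_, ?_⟩
    · rw [Heisenberg.inv_a]; exact dvd_neg.mpr ha
    · rw [Heisenberg.inv_b]; exact dvd_neg.mpr hb
    · rw [Heisenberg.inv_c]; exact dvd_add (dvd_neg.mpr hc) (hb.mul_left _)

theorem heisM_dvd_succ (q : ℕ → ℕ) (ℓ : ℕ) : heisM q ℓ ∣ heisM q (ℓ + 1) := by
  exact Finset.prod_dvd_prod_of_subset _ _ (fun i => (q i : ℤ))
    (Finset.range_subset_range.mpr (by omega))

theorem heisN_dvd_succ (q : ℕ → ℕ) (ℓ : ℕ) : heisN q ℓ ∣ heisN q (ℓ + 1) := by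
  exact Finset.prod_dvd_prod_of_subset _ _ (fun i => (q i : ℤ) ^ 2)
    (Finset.range_subset_range.mpr (by omega))

theorem heisSub_antitone (q : ℕ → ℕ) (ℓ : ℕ) : heisSub q (ℓ + 1) ≤ heisSub q ℓ := by
  rintro x ⟨ha, hb, hc⟩
  exact ⟨(heisM_dvd_succ q ℓ).trans ha, (heisN_dvd_succ q ℓ).trans hb,
    (heisN_dvd_succ q ℓ).trans hc⟩

instance (H : Subgroup Heisenberg) : Countable (Heisenberg ⧸ H) :=
  inferInstanceAs (Countable (Quotient (QuotientGroup.leftRel H)))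

/-- A metric realizing the discrete topology on the coset space `H ⧸ K`. -/
noncomputable instance (H : Subgroup Heisenberg) : MetricSpace (Heisenberg ⧸ H) :=
  letI : Encodable (Heisenberg ⧸ H) := Encodable.ofCountable _
  MetricSpace.induced Encodable.encode Encodable.encode_injective inferInstance

instance (H : Subgroup Heisenberg) : DiscreteTopology (Heisenberg ⧸ H) := by
  letI : Encodable (Heisenberg ⧸ H) := Encodable.ofCountable _
  have hiso : Isometry (Encodable.encode : Heisenberg ⧸ H → ℕ) :=
    Isometry.of_dist_eq fun _ _ => rfl
  exact hiso.isEmbedding.discreteTopology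

/-- The bonding map `H/H_{ℓ+1} → H/H_ℓ` of the inverse limit, induced by the
inclusion `H_{ℓ+1} ⊆ H_ℓ`. -/
def heisBond (q : ℕ → ℕ) (ℓ : ℕ) :
    Heisenberg ⧸ heisSub q (ℓ + 1) → Heisenberg ⧸ heisSub q ℓ :=
  Subgroup.quotientMapOfLE (heisSub_antitone q ℓ)

theorem heisBond_smul (q : ℕ → ℕ) (ℓ : ℕ) (g : Heisenberg)
    (z : Heisenberg ⧸ heisSub q (ℓ + 1)) :
    heisBond q ℓ (g • z) = g • heisBond q ℓ z := by
  induction z using Quotient.inductionOn' with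
  | h z => rfl

/-- The inverse limit `X_∞ = lim← H/H_ℓ` of the coset spaces of the chain `H_ℓ`. -/
def XinfH (q : ℕ → ℕ) : Type :=
  { x : ∀ ℓ, Heisenberg ⧸ heisSub q ℓ // ∀ ℓ, heisBond q ℓ (x (ℓ + 1)) = x ℓ }

noncomputable instance (q : ℕ → ℕ) : MetricSpace (∀ ℓ, Heisenberg ⧸ heisSub q ℓ) :=
  PiCountable.metricSpace

noncomputable instance (q : ℕ → ℕ) : MetricSpace (XinfH q) :=
  inferInstanceAs (MetricSpace
    { x : ∀ ℓ, Heisenberg ⧸ heisSub q ℓ // ∀ ℓ, heisBond q ℓ (x (ℓ + 1)) = x ℓ })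

theorem heisM_ne_zero {q : ℕ → ℕ} (hq : ∀ i, q i ≠ 0) (ℓ : ℕ) : heisM q ℓ ≠ 0 :=
  Finset.prod_ne_zero_iff.mpr fun i _ => Int.natCast_ne_zero.mpr (hq i)

theorem heisN_ne_zero {q : ℕ → ℕ} (hq : ∀ i, q i ≠ 0) (ℓ : ℕ) : heisN q ℓ ≠ 0 :=
  Finset.prod_ne_zero_iff.mpr fun i _ => pow_ne_zero _ (Int.natCast_ne_zero.mpr (hq i))

/-- An auxiliary congruence: integers whose difference is divisible by `n` have equal
images in `ZMod n.natAbs`. -/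
theorem zmod_eq_of_dvd_sub {z w n : ℤ} (h : n ∣ w - z) :
    ((z : ZMod n.natAbs) = (w : ZMod n.natAbs)) :=
  (ZMod.intCast_eq_intCast_iff _ _ _).mpr ((Int.modEq_iff_dvd).mpr (Int.natAbs_dvd.mpr h))

theorem dvd_sub_of_zmod_eq {z w n : ℤ} (h : ((z : ZMod n.natAbs) = (w : ZMod n.natAbs))) :
    n ∣ w - z :=
  Int.natAbs_dvd.mp ((Int.modEq_iff_dvd).mp ((ZMod.intCast_eq_intCast_iff _ _ _).mp h))

theorem heisQuot_finite {q : ℕ → ℕ} (hq : ∀ i, q i ≠ 0) (ℓ : ℕ) :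
    Finite (Heisenberg ⧸ heisSub q ℓ) := by
  have hM0 := heisM_ne_zero hq ℓ
  have hN0 := heisN_ne_zero hq ℓ
  haveI : NeZero (heisM q ℓ).natAbs := ⟨Int.natAbs_ne_zero.mpr hM0⟩
  haveI : NeZero (heisN q ℓ).natAbs := ⟨Int.natAbs_ne_zero.mpr hN0⟩
  set m := (heisM q ℓ).natAbs
  set nn := (heisN q ℓ).natAbs
  let F : Heisenberg ⧸ heisSub q ℓ → ZMod m × ZMod nn × ZMod nn := fun z =>
    Quotient.liftOn' z
      (fun g => ((g.a : ZMod m), (g.b : ZMod nn), (g.c : ZMod nn)))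
      (by
        intro x y hxy
        obtain ⟨ha, hb, hc⟩ := QuotientGroup.leftRel_apply.mp hxy
        rw [Heisenberg.mul_a, Heisenberg.inv_a] at ha
        rw [Heisenberg.mul_b, Heisenberg.inv_b] at hb
        rw [Heisenberg.mul_c, Heisenberg.inv_c, Heisenberg.inv_a] at hc
        have ha' : heisM q ℓ ∣ y.a - x.a := by rwa [neg_add_eq_sub] at ha
        have hb' : heisN q ℓ ∣ y.b - x.b := by rwa [neg_add_eq_sub] at hb
        have hc' : heisN q ℓ ∣ y.c - x.c := by
          have hrw : y.c - x.c = (-x.c + x.a * x.b + y.c + -x.a * y.b) + x.a * (-x.b + y.b) := by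
            ring
          rw [hrw]
          exact dvd_add hc (Dvd.dvd.mul_left hb x.a)
        exact Prod.ext (zmod_eq_of_dvd_sub ha')
          (Prod.ext (zmod_eq_of_dvd_sub hb') (zmod_eq_of_dvd_sub hc')))
  have hFinj : Function.Injective F := by
    intro z w
    induction z using Quotient.inductionOn' with
    | h x =>
      induction w using Quotient.inductionOn' with
      | h y =>
        intro hEq
        have h1 : ((x.a : ZMod m), (x.b : ZMod nn), (x.c : ZMod nn))
            = ((y.a : ZMod m), (y.b : ZMod nn), (y.c : ZMod nn)) := hEq
        have ha := dvd_sub_of_zmod_eq (n := heisM q ℓ) (congrArg Prod.fst h1)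
        have hb := dvd_sub_of_zmod_eq (n := heisN q ℓ) (congrArg (Prod.fst ∘ Prod.snd) h1)
        have hc := dvd_sub_of_zmod_eq (n := heisN q ℓ) (congrArg (Prod.snd ∘ Prod.snd) h1)
        apply Quotient.sound'
        apply QuotientGroup.leftRel_apply.mpr
        refine ⟨?_, ?_, ?_⟩
        · rw [Heisenberg.mul_a, Heisenberg.inv_a, neg_add_eq_sub]; exact ha
        · rw [Heisenberg.mul_b, Heisenberg.inv_b, neg_add_eq_sub]; exact hb
        · rw [Heisenberg.mul_c, Heisenberg.inv_c, Heisenberg.inv_a]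
          have hrw : -x.c + x.a * x.b + y.c + -x.a * y.b
              = (y.c - x.c) + x.a * -(y.b - x.b) := by ring
          rw [hrw]
          exact dvd_add hc (Dvd.dvd.mul_left (dvd_neg.mpr hb) x.a)
  exact Finite.of_injective F hFinj

theorem xinfH_compactSpace (q : ℕ → ℕ) (hq : ∀ i, q i ≠ 0) : CompactSpace (XinfH q) := by
  haveI : ∀ ℓ, Finite (Heisenberg ⧸ heisSub q ℓ) := fun ℓ => heisQuot_finite hq ℓ
  haveI : ∀ ℓ, CompactSpace (Heisenberg ⧸ heisSub q ℓ) := fun ℓ => Finite.compactSpace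
  have hclosed : IsClosed { x : ∀ ℓ, Heisenberg ⧸ heisSub q ℓ |
      ∀ ℓ, heisBond q ℓ (x (ℓ + 1)) = x ℓ } := by
    have hrw : { x : ∀ ℓ, Heisenberg ⧸ heisSub q ℓ | ∀ ℓ, heisBond q ℓ (x (ℓ + 1)) = x ℓ }
        = ⋂ ℓ, { x : ∀ ℓ, Heisenberg ⧸ heisSub q ℓ | heisBond q ℓ (x (ℓ + 1)) = x ℓ } := by
      ext x; simp [Set.mem_iInter]
    rw [hrw]
    refine isClosed_iInter fun ℓ => isClosed_eq ?_ (continuous_apply ℓ)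
    exact (continuous_of_discreteTopology (f := heisBond q ℓ)).comp (continuous_apply (ℓ + 1))
  exact isCompact_iff_compactSpace.mp hclosed.isCompact

/-- The homeomorphism of `X_∞` given by the left translation action of `g`. -/
def heisActHomeo (q : ℕ → ℕ) (g : Heisenberg) : XinfH q ≃ₜ XinfH q where
  toFun x := ⟨fun ℓ => g • x.1 ℓ, fun ℓ => by rw [heisBond_smul, x.2 ℓ]⟩
  invFun x := ⟨fun ℓ => g⁻¹ • x.1 ℓ, fun ℓ => by rw [heisBond_smul, x.2 ℓ]⟩
  left_inv x := Subtype.ext (funext fun ℓ => inv_smul_smul g (x.1 ℓ))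
  right_inv x := Subtype.ext (funext fun ℓ => smul_inv_smul g (x.1 ℓ))
  continuous_toFun := by
    refine Continuous.subtype_mk (continuous_pi fun ℓ => ?_) _
    exact (continuous_of_discreteTopology
        (f := fun z : Heisenberg ⧸ heisSub q ℓ => g • z)).comp
      ((continuous_apply ℓ).comp continuous_subtype_val)
  continuous_invFun := by
    refine Continuous.subtype_mk (continuous_pi fun ℓ => ?_) _
    exact (continuous_of_discreteTopology
        (f := fun z : Heisenberg ⧸ heisSub q ℓ => g⁻¹ • z)).comp
      ((continuous_apply ℓ).comp continuous_subtype_val)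

/-- The natural left action of the Heisenberg group on the inverse limit
`X_∞ = lim← H/H_ℓ`. -/
def heisAct (q : ℕ → ℕ) : Heisenberg →* (XinfH q ≃ₜ XinfH q) where
  toFun := heisActHomeo q
  map_one' := Homeomorph.ext fun x => Subtype.ext (funext fun ℓ => one_smul _ (x.1 ℓ))
  map_mul' g h := Homeomorph.ext fun x => Subtype.ext (funext fun ℓ => mul_smul g h (x.1 ℓ))


/-!
`X_∞` is the inverse limit of the finite discrete sets `H/H_ℓ`, metrized so that points at
distance `< 2⁻ᴸ` have the same level-`L` coordinate. Minimality and equicontinuity follow at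
once; topological freeness follows from `⋂ H_ℓ = {e}`, since then a nontrivial element fixes
no point of the dense image of `H`.

For wildness: if `γ_ℓ⁻¹ γ_{ℓ+1} ∈ C_ℓ` for all `ℓ`, translating level `ℓ` by `γ_ℓ` is a
homeomorphism in the closure `G(Φ)`. Take `γ_ℓ = (M_s e_ℓ, 0, 0)` with `e_ℓ ≡ 1 (mod N_s)` and
`e_ℓ ≡ 0 (mod q_{s+1}² ⋯ q_ℓ²)`, truncations of the idempotent of `∏ ℤ_{q_i}` supported at
`q_0, …, q_s`. Since `k⁻¹ (β, 0, 0) k = (β, 0, β b)` for `k = (a, b, c)`, this element fixes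
the level-`s` cylinder pointwise (there `N_s ∣ b`), yet moves the point `(0, N_{s-1}, 0)` of the
level-`(s-1)` cylinder because `M_s ∤ N_{s-1}`. Cylinders being arbitrarily small, `G(Φ)` is
not locally quasi-analytic.
-/

theorem exists_two_inv_pow_lt {ε : ℝ} (hε : 0 < ε) : ∃ L : ℕ, (2⁻¹ : ℝ) ^ L < ε :=
  exists_pow_lt_of_lt_one hε (by norm_num)

namespace PiCountable

open scoped PiCountable

variable {F : ℕ → Type*} [∀ i, PseudoMetricSpace (F i)]

theorem dist_le_of_forall_le_eq {x y : ∀ i, F i} {L : ℕ} (h : ∀ i ≤ L, x i = y i) :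
    dist x y ≤ 2⁻¹ ^ L := by
  have hhead : ∑ i ∈ Finset.range (L + 1),
      min (2⁻¹ ^ Encodable.encode i) (dist (x i) (y i)) = 0 :=
    Finset.sum_eq_zero fun i hi => by
      rw [h i (Nat.lt_succ_iff.mp (Finset.mem_range.mp hi)), dist_self,
        min_eq_right (by positivity)]
  rw [dist_eq_tsum, ← (dist_summable x y).sum_add_tsum_nat_add (L + 1), hhead, zero_add]
  calc ∑' i, min (2⁻¹ ^ Encodable.encode (i + (L + 1))) (dist (x (i + (L + 1))) (y (i + (L + 1))))
      ≤ ∑' i : ℕ, 2⁻¹ ^ (L + 1) * 2⁻¹ ^ i := by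
        refine Summable.tsum_le_tsum (fun i => ?_)
          ((dist_summable x y).comp_injective (add_left_injective (L + 1)))
          ((summable_geometric_of_lt_one (by norm_num) (by norm_num)).mul_left _)
        rw [Encodable.encode_nat, pow_add, mul_comm]
        exact min_le_left _ _
    _ = 2⁻¹ ^ L := by rw [tsum_mul_left, tsum_geometric_inv_two, pow_succ]; ring

theorem eq_of_dist_lt {x y : ∀ i, F i} {L : ℕ} (hF : ∀ a b : F L, a ≠ b → 1 ≤ dist a b)
    (h : dist x y < 2⁻¹ ^ L) : x L = y L := by
  by_contra hne
  have hle : dist (x L) (y L) ≤ dist x y := dist_le_dist_pi_of_dist_lt (by simpa using h)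
  have : (2⁻¹ : ℝ) ^ L ≤ 1 := pow_le_one₀ (by norm_num) (by norm_num)
  linarith [hF _ _ hne]

end PiCountable

theorem Subgroup.Normal.inv_inv_mul_inv_mem {G : Type*} [Group G] {N : Subgroup G}
    (hN : N.Normal) {a b : G} (h : a⁻¹ * b ∈ N) : a⁻¹⁻¹ * b⁻¹ ∈ N := by
  rw [inv_inv]
  exact hN.mem_comm (by simpa using inv_mem h)

namespace QuotientGroup

variable {G : Type*} [Group G] {H : Subgroup G}

theorem mk_eq_mk_one_iff {k : G} : (k : G ⧸ H) = ((1 : G) : G ⧸ H) ↔ k ∈ H := by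
  rw [QuotientGroup.eq, mul_one, inv_mem_iff]

theorem smul_mk_eq_self_iff (g k : G) : g • (k : G ⧸ H) = k ↔ k⁻¹ * (g * k) ∈ H :=
  eq_comm.trans QuotientGroup.eq

theorem smul_eq_smul_of_inv_mul_mem {N : Subgroup G} [hN : N.Normal] (hNH : N ≤ H) {g g' : G}
    (h : g⁻¹ * g' ∈ N) (z : G ⧸ H) : g • z = g' • z := by
  induction z using QuotientGroup.induction_on with
  | H k =>
    refine QuotientGroup.eq.mpr (hNH ?_)
    simpa [mul_assoc] using hN.conj_mem _ h k⁻¹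

end QuotientGroup

namespace Heisenberg

theorem conj_a (g x : Heisenberg) : (g * x * g⁻¹).a = x.a := by
  simp

theorem conj_b (g x : Heisenberg) : (g * x * g⁻¹).b = x.b := by
  simp

theorem conj_c (g x : Heisenberg) : (g * x * g⁻¹).c = x.c + g.a * x.b - g.b * x.a := by
  simp only [mul_a, mul_c, inv_b, inv_c]
  ring

theorem inv_mul_mk_mul (β : ℤ) (k : Heisenberg) :
    k⁻¹ * (⟨β, 0, 0⟩ * k) = ⟨β, 0, β * k.b⟩ := by
  ext <;> simp only [mul_a, mul_b, mul_c, inv_a, inv_b, inv_c] <;> ring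

end Heisenberg

theorem heisN_eq_sq (q : ℕ → ℕ) (ℓ : ℕ) : heisN q ℓ = heisM q ℓ ^ 2 := by
  rw [heisM, heisN, Finset.prod_pow]

theorem heisM_dvd_heisN (q : ℕ → ℕ) (ℓ : ℕ) : heisM q ℓ ∣ heisN q ℓ :=
  (heisN_eq_sq q ℓ).symm ▸ dvd_pow_self _ two_ne_zero

theorem heisM_dvd_of_le (q : ℕ → ℕ) {ℓ m : ℕ} (h : ℓ ≤ m) : heisM q ℓ ∣ heisM q m :=
  Finset.prod_dvd_prod_of_subset _ _ _ (Finset.range_subset_range.mpr (by omega))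

theorem two_pow_le_heisM {q : ℕ → ℕ} (hq : ∀ i, 2 ≤ q i) (ℓ : ℕ) :
    2 ^ (ℓ + 1) ≤ heisM q ℓ := by
  calc (2 : ℤ) ^ (ℓ + 1) = ∏ _i ∈ Finset.range (ℓ + 1), (2 : ℤ) := by simp
    _ ≤ heisM q ℓ :=
      Finset.prod_le_prod (fun _ _ => by norm_num) fun i _ => by exact_mod_cast hq i

theorem eq_zero_of_forall_heisM_dvd {q : ℕ → ℕ} (hq : ∀ i, 2 ≤ q i) {z : ℤ}
    (h : ∀ ℓ, heisM q ℓ ∣ z) : z = 0 := by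
  refine Int.eq_zero_of_dvd_of_natAbs_lt_natAbs (h z.natAbs) ?_
  have hM := two_pow_le_heisM hq z.natAbs
  have hz : (z.natAbs : ℤ) < 2 ^ (z.natAbs + 1) := by
    exact_mod_cast Nat.lt_two_pow_self.trans (Nat.pow_lt_pow_right one_lt_two (Nat.lt_succ_self _))
  omega

theorem not_heisM_succ_dvd {q : ℕ → ℕ} (hq : ∀ i, 2 ≤ q i) (L : ℕ) :
    ¬ heisM q (L + 1) ∣ heisM q L := fun h => by
  have hpos : 0 < heisM q L := lt_of_lt_of_le (by positivity) (two_pow_le_heisM hq L)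
  have hsucc : heisM q (L + 1) = heisM q L * q (L + 1) := Finset.prod_range_succ _ _
  have hq' : (2 : ℤ) ≤ q (L + 1) := by exact_mod_cast hq (L + 1)
  have := Int.le_of_dvd hpos h
  nlinarith

/-- `M_ℓ / M_s = q_{s+1} ⋯ q_ℓ`, the empty product `1` when `ℓ ≤ s`. -/
def heisMTail (q : ℕ → ℕ) (s ℓ : ℕ) : ℤ := ∏ i ∈ Finset.Ico (s + 1) (ℓ + 1), (q i : ℤ)

theorem heisMTail_dvd_succ (q : ℕ → ℕ) (s ℓ : ℕ) : heisMTail q s ℓ ∣ heisMTail q s (ℓ + 1) :=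
  Finset.prod_dvd_prod_of_subset _ _ _ (Finset.Ico_subset_Ico_right (by omega))

theorem heisM_dvd_heisM_mul_heisMTail (q : ℕ → ℕ) (s ℓ : ℕ) :
    heisM q ℓ ∣ heisM q s * heisMTail q s ℓ := by
  rcases le_total ℓ s with h | h
  · exact (heisM_dvd_of_le q h).mul_right _
  · rw [heisM, heisM, heisMTail, Finset.prod_range_mul_prod_Ico _ (by omega)]

theorem heisN_dvd_heisN_mul_heisMTail_sq (q : ℕ → ℕ) (s ℓ : ℕ) :
    heisN q ℓ ∣ heisN q s * heisMTail q s ℓ ^ 2 := by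
  rw [heisN_eq_sq, heisN_eq_sq, ← mul_pow]
  exact pow_dvd_pow_of_dvd (heisM_dvd_heisM_mul_heisMTail q s ℓ) 2

theorem isCoprime_of_ne {q : ℕ → ℕ} (hq : ∀ i, (q i).Prime) (hinj : Function.Injective q)
    {i j : ℕ} (h : i ≠ j) : IsCoprime (q i : ℤ) (q j) :=
  Nat.isCoprime_iff_coprime.mpr ((Nat.coprime_primes (hq i) (hq j)).mpr (hinj.ne h))

theorem isCoprime_heisM_heisMTail {q : ℕ → ℕ} (hq : ∀ i, (q i).Prime)
    (hinj : Function.Injective q) (s ℓ : ℕ) : IsCoprime (heisM q s) (heisMTail q s ℓ) :=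
  IsCoprime.prod_left fun i hi => IsCoprime.prod_right fun j hj => isCoprime_of_ne hq hinj <| by
    simp only [Finset.mem_range, Finset.mem_Ico] at hi hj
    omega

theorem not_heisM_dvd_heisN {q : ℕ → ℕ} (hq : ∀ i, (q i).Prime)
    (hinj : Function.Injective q) {L s : ℕ} (h : L < s) : ¬ heisM q s ∣ heisN q L := by
  intro hdvd
  have hcop : IsCoprime (q s : ℤ) (heisN q L) :=
    IsCoprime.prod_right fun i hi => (isCoprime_of_ne hq hinj <| by
      simp only [Finset.mem_range] at hi
      omega).pow_right
  exact (Nat.prime_iff_prime_int.mp (hq s)).not_isUnit <| hcop.isUnit_of_dvd' dvd_rfl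
    ((Finset.dvd_prod_of_mem _ (Finset.self_mem_range_succ s)).trans hdvd)

theorem exists_seq_dvd_sub_one_and_heisMTail_sq_dvd {q : ℕ → ℕ} (hq : ∀ i, (q i).Prime)
    (hinj : Function.Injective q) (s : ℕ) :
    ∃ e : ℕ → ℤ, ∀ ℓ, heisN q s ∣ e ℓ - 1 ∧ heisMTail q s ℓ ^ 2 ∣ e ℓ := by
  choose u v huv using fun ℓ => (isCoprime_heisM_heisMTail hq hinj s ℓ).pow (m := 2) (n := 2)
  refine ⟨fun ℓ => v ℓ * heisMTail q s ℓ ^ 2, fun ℓ => ⟨⟨-u ℓ, ?_⟩, dvd_mul_left _ _⟩⟩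
  rw [heisN_eq_sq]
  linear_combination huv ℓ

theorem heisN_dvd_sub_succ {q : ℕ → ℕ} (hq : ∀ i, (q i).Prime) (hinj : Function.Injective q)
    {s : ℕ} {e : ℕ → ℤ} (he : ∀ ℓ, heisN q s ∣ e ℓ - 1 ∧ heisMTail q s ℓ ^ 2 ∣ e ℓ) (ℓ : ℕ) :
    heisN q ℓ ∣ e (ℓ + 1) - e ℓ := by
  refine (heisN_dvd_heisN_mul_heisMTail_sq q s ℓ).trans (IsCoprime.mul_dvd ?_ ?_ ?_)
  · rw [heisN_eq_sq]
    exact (isCoprime_heisM_heisMTail hq hinj s ℓ).pow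
  · simpa using dvd_sub (he (ℓ + 1)).1 (he ℓ).1
  · exact dvd_sub ((pow_dvd_pow_of_dvd (heisMTail_dvd_succ q s ℓ) 2).trans (he (ℓ + 1)).2)
      (he ℓ).2

theorem not_heisN_dvd_heisM_mul {q : ℕ → ℕ} (hq : ∀ i, (q i).Prime)
    (hinj : Function.Injective q) {L s : ℕ} (hLs : L < s) {e : ℤ} (he : heisN q s ∣ e - 1) :
    ¬ heisN q s ∣ heisM q s * e * heisN q L := by
  intro hdvd
  have hM : heisM q s ≠ 0 := heisM_ne_zero (fun i => (hq i).ne_zero) s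
  rw [heisN_eq_sq, sq, mul_assoc] at hdvd
  have h1 : heisM q s ∣ e * heisN q L := (mul_dvd_mul_iff_left hM).mp hdvd
  have h2 : heisM q s ∣ (e - 1) * heisN q L := ((heisM_dvd_heisN q s).trans he).mul_right _
  have hdiff : e * heisN q L - (e - 1) * heisN q L = heisN q L := by ring
  exact not_heisM_dvd_heisN hq hinj hLs (hdiff ▸ dvd_sub h1 h2)

theorem iInf_heisSub_eq_bot {q : ℕ → ℕ} (hq : ∀ i, 2 ≤ q i) : ⨅ ℓ, heisSub q ℓ = ⊥ := by
  refine (Subgroup.eq_bot_iff_forall _).mpr fun g hg => ?_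
  rw [Subgroup.mem_iInf] at hg
  have hzero : ∀ z : ℤ, (∀ ℓ, heisN q ℓ ∣ z) → z = 0 := fun z hz =>
    eq_zero_of_forall_heisM_dvd hq fun ℓ => (heisM_dvd_heisN q ℓ).trans (hz ℓ)
  ext
  exacts [eq_zero_of_forall_heisM_dvd hq fun ℓ => (hg ℓ).1, hzero _ fun ℓ => (hg ℓ).2.1,
    hzero _ fun ℓ => (hg ℓ).2.2]

instance heisCore_normal (q : ℕ → ℕ) (ℓ : ℕ) : (heisCore q ℓ).Normal where
  conj_mem x := by
    rintro ⟨ha, hb, hc⟩ g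
    refine ⟨?_, ?_, ?_⟩
    · rwa [Heisenberg.conj_a]
    · rwa [Heisenberg.conj_b]
    · rw [Heisenberg.conj_c]
      exact dvd_sub (dvd_add hc (hb.mul_left _)) (ha.mul_left _)

theorem heisCore_le_heisSub (q : ℕ → ℕ) (ℓ : ℕ) : heisCore q ℓ ≤ heisSub q ℓ :=
  fun _ ⟨ha, hb, hc⟩ => ⟨(heisM_dvd_heisN q ℓ).trans ha, hb, hc⟩

theorem normalCore_heisSub (q : ℕ → ℕ) (ℓ : ℕ) :
    (heisSub q ℓ).normalCore = heisCore q ℓ := by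
  refine le_antisymm (fun x hx => ?_)
    (Subgroup.normal_le_normalCore.mpr (heisCore_le_heisSub q ℓ))
  obtain ⟨-, hb, hc⟩ : x ∈ heisSub q ℓ := by simpa using hx 1
  -- conjugating by `(0, -1, 0)` adds `a` to the `c`-coordinate
  obtain ⟨-, -, hc'⟩ : (⟨0, -1, 0⟩ * x * (⟨0, -1, 0⟩ : Heisenberg)⁻¹) ∈ heisSub q ℓ := hx _
  rw [Heisenberg.conj_c] at hc'
  exact ⟨(dvd_add_right hc).mp (by simpa using hc'), hb, hc⟩

namespace XinfH

variable {q : ℕ → ℕ}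

theorem coord_eq_mk_of_le (x : XinfH q) {ℓ m : ℕ} (h : ℓ ≤ m) {g : Heisenberg}
    (hg : x.1 m = g) : x.1 ℓ = g := by
  induction m, h using Nat.le_induction generalizing g with
  | base => exact hg
  | succ m _ ih => exact ih (by rw [← x.2 m, hg]; rfl)

theorem exists_coord_eq_mk (x : XinfH q) (ℓ : ℕ) : ∃ g : Heisenberg, x.1 ℓ = g :=
  (QuotientGroup.mk_surjective (x.1 ℓ)).imp fun _ h => h.symm

theorem continuous_coord (ℓ : ℕ) : Continuous fun x : XinfH q => x.1 ℓ :=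
  (continuous_apply ℓ).comp continuous_subtype_val

def ofHeisenberg (q : ℕ → ℕ) (g : Heisenberg) : XinfH q :=
  ⟨fun _ => g, fun _ => rfl⟩

@[simp] theorem ofHeisenberg_coord (g : Heisenberg) (ℓ : ℕ) :
    (ofHeisenberg q g).1 ℓ = g := rfl

@[simp] theorem heisAct_coord (g : Heisenberg) (x : XinfH q) (ℓ : ℕ) :
    (heisAct q g x).1 ℓ = g • x.1 ℓ := rfl

theorem heisAct_ofHeisenberg (g h : Heisenberg) :
    heisAct q g (ofHeisenberg q h) = ofHeisenberg q (g * h) := rfl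

theorem ofHeisenberg_injective (hq : ∀ i, 2 ≤ q i) : Function.Injective (ofHeisenberg q) := by
  intro g h hgh
  have hmem : g⁻¹ * h ∈ ⨅ ℓ, heisSub q ℓ :=
    Subgroup.mem_iInf.mpr fun ℓ => QuotientGroup.eq.mp (congrArg (fun x : XinfH q => x.1 ℓ) hgh)
  rw [iInf_heisSub_eq_bot hq, Subgroup.mem_bot, inv_mul_eq_one] at hmem
  exact hmem

theorem one_le_dist_of_ne {H : Subgroup Heisenberg} {z w : Heisenberg ⧸ H} (h : z ≠ w) :
    1 ≤ dist z w :=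
  letI : Encodable (Heisenberg ⧸ H) := Encodable.ofCountable _
  Nat.pairwise_one_le_dist (Encodable.encode_injective.ne h)

theorem dist_le_of_coord_eq {x y : XinfH q} {L : ℕ} (h : x.1 L = y.1 L) :
    dist x y ≤ 2⁻¹ ^ L := by
  refine PiCountable.dist_le_of_forall_le_eq fun i hi => ?_
  obtain ⟨g, hg⟩ := exists_coord_eq_mk x L
  rw [coord_eq_mk_of_le x hi hg, coord_eq_mk_of_le y hi (h ▸ hg)]

theorem coord_eq_of_dist_lt {x y : XinfH q} {L : ℕ} (h : dist x y < 2⁻¹ ^ L) :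
    x.1 L = y.1 L :=
  PiCountable.eq_of_dist_lt (fun _ _ => one_le_dist_of_ne) h

theorem dense_of_forall_exists_coord_eq {S : Set (XinfH q)}
    (h : ∀ (x : XinfH q) L, ∃ y ∈ S, y.1 L = x.1 L) : Dense S := by
  refine Metric.dense_iff.mpr fun x r hr => ?_
  obtain ⟨L, hL⟩ := exists_two_inv_pow_lt hr
  obtain ⟨y, hyS, hy⟩ := h x L
  exact ⟨y, (dist_le_of_coord_eq hy).trans_lt hL, hyS⟩

theorem denseRange_ofHeisenberg : DenseRange (ofHeisenberg q) :=
  dense_of_forall_exists_coord_eq fun x L =>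
    let ⟨g, hg⟩ := exists_coord_eq_mk x L
    ⟨ofHeisenberg q g, Set.mem_range_self g, hg.symm⟩

instance : TotallyDisconnectedSpace (XinfH q) :=
  inferInstanceAs (TotallyDisconnectedSpace
    { x : ∀ ℓ, Heisenberg ⧸ heisSub q ℓ // ∀ ℓ, heisBond q ℓ (x (ℓ + 1)) = x ℓ })

theorem perfect_univ (hq : ∀ i, 2 ≤ q i) : Perfect (Set.univ : Set (XinfH q)) := by
  refine ⟨isClosed_univ, preperfect_iff_nhds.mpr fun x _ U hU => ?_⟩
  obtain ⟨r, hr, hball⟩ := Metric.mem_nhds_iff.mp hU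
  obtain ⟨L, hL⟩ := exists_two_inv_pow_lt hr
  obtain ⟨g, hg⟩ := exists_coord_eq_mk x (L + 1)
  have hw : (⟨heisM q L, 0, 0⟩ : Heisenberg) ∈ heisSub q L := ⟨dvd_rfl, dvd_zero _, dvd_zero _⟩
  have hw' : (⟨heisM q L, 0, 0⟩ : Heisenberg) ∉ heisSub q (L + 1) :=
    fun h => not_heisM_succ_dvd hq L h.1
  refine ⟨ofHeisenberg q (g * ⟨heisM q L, 0, 0⟩), ⟨hball ?_, trivial⟩, fun h => hw' ?_⟩
  · refine (dist_le_of_coord_eq ?_).trans_lt hL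
    rw [ofHeisenberg_coord, coord_eq_mk_of_le x (Nat.le_succ L) hg,
      QuotientGroup.mk_mul_of_mem _ hw]
  · have := congrArg (fun x : XinfH q => x.1 (L + 1)) h
    simp only [ofHeisenberg_coord, hg] at this
    simpa using QuotientGroup.eq.mp this.symm

theorem isMinimalAction_heisAct : IsMinimalAction (heisAct q) := by
  intro x
  refine dense_of_forall_exists_coord_eq fun z L => ?_
  obtain ⟨k, hk⟩ := exists_coord_eq_mk z L
  obtain ⟨h, hh⟩ := exists_coord_eq_mk x L
  refine ⟨_, Set.mem_range_self (k * h⁻¹), ?_⟩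
  rw [heisAct_coord, hh, hk, MulAction.Quotient.smul_mk, smul_eq_mul, inv_mul_cancel_right]

theorem isEquicontinuousAction_heisAct : IsEquicontinuousAction (heisAct q) := by
  intro ε hε
  obtain ⟨L, hL⟩ := exists_two_inv_pow_lt hε
  refine ⟨2⁻¹ ^ L, by positivity, fun x y hxy g => (dist_le_of_coord_eq ?_).trans_lt hL⟩
  rw [heisAct_coord, heisAct_coord, coord_eq_of_dist_lt hxy]

theorem isNowhereDense_fixedPoints (hq : ∀ i, 2 ≤ q i) {g : Heisenberg} (hg : g ≠ 1) :
    IsNowhereDense {x : XinfH q | heisAct q g x = x} := by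
  have hclosed : IsClosed {x : XinfH q | heisAct q g x = x} :=
    isClosed_eq (heisAct q g).continuous continuous_id
  rw [hclosed.isNowhereDense_iff, interior_eq_empty_iff_dense_compl]
  refine denseRange_ofHeisenberg.mono ?_
  rintro _ ⟨h, rfl⟩ hfix
  rw [Set.mem_ofPred_eq, heisAct_ofHeisenberg] at hfix
  exact hg (mul_eq_right.mp (ofHeisenberg_injective hq hfix))

theorem isTopologicallyFree_heisAct (hq : ∀ i, 2 ≤ q i) : IsTopologicallyFree (heisAct q) := by
  have hunion : {x : XinfH q | ∃ g : Heisenberg, g ≠ 1 ∧ heisAct q g x = x}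
      = ⋃ g : {g : Heisenberg // g ≠ 1}, {x | heisAct q g x = x} := by
    ext x; simp
  rw [IsTopologicallyFree, hunion]
  exact isMeagre_iUnion fun g => (isNowhereDense_fixedPoints hq g.2).isMeagre

def cyl (q : ℕ → ℕ) (L : ℕ) : Set (XinfH q) := {x | x.1 L = (1 : Heisenberg)}

theorem isOpen_cyl (L : ℕ) : IsOpen (cyl q L) :=
  (isOpen_discrete {((1 : Heisenberg) : Heisenberg ⧸ heisSub q L)}).preimage (continuous_coord L)

theorem ofHeisenberg_mem_cyl {L : ℕ} {k : Heisenberg} (hk : k ∈ heisSub q L) :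
    ofHeisenberg q k ∈ cyl q L :=
  QuotientGroup.mk_eq_mk_one_iff.mpr hk

theorem cyl_subset_cyl {L s : ℕ} (h : L ≤ s) : cyl q s ⊆ cyl q L :=
  fun x hx => coord_eq_mk_of_le x h hx

theorem diam_cyl_le (L : ℕ) : Metric.diam (cyl q L) ≤ 2⁻¹ ^ L :=
  Metric.diam_le_of_forall_dist_le (by positivity) fun _ hx _ hy =>
    dist_le_of_coord_eq (hx.trans hy.symm)

theorem exists_coord_eq_mk_mem_of_mem_cyl {s : ℕ} {x : XinfH q} (hx : x ∈ cyl q s) (ℓ : ℕ) :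
    ∃ k ∈ heisSub q s, x.1 ℓ = k := by
  obtain ⟨k, hk⟩ := exists_coord_eq_mk x (max ℓ s)
  refine ⟨k, ?_, coord_eq_mk_of_le x (le_max_left ℓ s) hk⟩
  exact QuotientGroup.mk_eq_mk_one_iff.mp
    ((coord_eq_mk_of_le x (le_max_right ℓ s) hk).symm.trans hx)

theorem not_isLocallyQuasiAnalytic_of_forall_exists {G : Type*} [Group G]
    (ρ : G →* (XinfH q ≃ₜ XinfH q))
    (h : ∀ L, ∃ s, L ≤ s ∧ ∃ g : G, (∀ x ∈ cyl q s, ρ g x = x) ∧ ∃ x ∈ cyl q L, ρ g x ≠ x) :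
    ¬ IsLocallyQuasiAnalytic ρ := by
  rintro ⟨ε, hε, hlqa⟩
  obtain ⟨L, hL⟩ := exists_two_inv_pow_lt hε
  obtain ⟨s, hLs, g, hfix, x, hx, hmove⟩ := h L
  exact hmove <| hlqa (cyl q L) (isOpen_cyl L) ⟨x, hx⟩ ((diam_cyl_le L).trans_lt hL)
    (cyl q s) (cyl_subset_cyl hLs) (isOpen_cyl s) ⟨_, ofHeisenberg_mem_cyl (one_mem _)⟩ g
    (Set.EqOn.image_eq_self hfix) hfix x hx

def coherentTranslationMap (γ : ℕ → Heisenberg)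
    (hγ : ∀ ℓ, (γ ℓ)⁻¹ * γ (ℓ + 1) ∈ heisCore q ℓ) : C(XinfH q, XinfH q) where
  toFun x := ⟨fun ℓ => γ ℓ • x.1 ℓ, fun ℓ => by
    rw [heisBond_smul, x.2 ℓ]
    exact (QuotientGroup.smul_eq_smul_of_inv_mul_mem (heisCore_le_heisSub q ℓ) (hγ ℓ) _).symm⟩
  continuous_toFun := Continuous.subtype_mk (continuous_pi fun ℓ =>
    continuous_of_discreteTopology.comp (continuous_coord ℓ)) _

/-- Translation by the profinite limit of the `γ ℓ`, in general not an element of `H`. -/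
def coherentTranslation (γ : ℕ → Heisenberg) (hγ : ∀ ℓ, (γ ℓ)⁻¹ * γ (ℓ + 1) ∈ heisCore q ℓ) :
    XinfH q ≃ₜ XinfH q where
  toFun := coherentTranslationMap γ hγ
  invFun := coherentTranslationMap (fun ℓ => (γ ℓ)⁻¹)
    fun ℓ => (heisCore_normal q ℓ).inv_inv_mul_inv_mem (hγ ℓ)
  left_inv x := Subtype.ext <| funext fun ℓ => inv_smul_smul (γ ℓ) (x.1 ℓ)
  right_inv x := Subtype.ext <| funext fun ℓ => smul_inv_smul (γ ℓ) (x.1 ℓ)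
  continuous_toFun := (coherentTranslationMap _ _).continuous
  continuous_invFun := (coherentTranslationMap _ _).continuous

@[simp] theorem coherentTranslation_coord (γ : ℕ → Heisenberg)
    (hγ : ∀ ℓ, (γ ℓ)⁻¹ * γ (ℓ + 1) ∈ heisCore q ℓ) (x : XinfH q) (ℓ : ℕ) :
    (coherentTranslation γ hγ x).1 ℓ = γ ℓ • x.1 ℓ := rfl

theorem coherentTranslation_mem_profiniteClosure [CompactSpace (XinfH q)]
    (γ : ℕ → Heisenberg) (hγ : ∀ ℓ, (γ ℓ)⁻¹ * γ (ℓ + 1) ∈ heisCore q ℓ) :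
    coherentTranslation γ hγ ∈ profiniteClosure (heisAct q) := by
  rw [profiniteClosure, ← SetLike.mem_coe, Subgroup.topologicalClosure_coe,
    Metric.mem_closure_iff]
  intro δ hδ
  obtain ⟨L, hL⟩ := exists_two_inv_pow_lt hδ
  refine ⟨heisAct q (γ L), Set.mem_range_self _,
    (Homeomorph.dist_lt_iff' _ _ hδ).mpr fun x => ?_⟩
  exact (dist_le_of_coord_eq (by rfl)).trans_lt hL

theorem exists_fixing_cyl_succ_not_fixing_cyl (hq : ∀ i, (q i).Prime)
    (hinj : Function.Injective q) [CompactSpace (XinfH q)] (L : ℕ) :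
    ∃ g ∈ profiniteClosure (heisAct q), (∀ x ∈ cyl q (L + 1), g x = x) ∧
      ∃ x ∈ cyl q L, g x ≠ x := by
  obtain ⟨e, he⟩ := exists_seq_dvd_sub_one_and_heisMTail_sq_dvd hq hinj (L + 1)
  set M := heisM q (L + 1)
  have hγ : ∀ ℓ, (⟨M * e ℓ, 0, 0⟩ : Heisenberg)⁻¹ * ⟨M * e (ℓ + 1), 0, 0⟩ ∈ heisCore q ℓ :=
    fun ℓ => ⟨show heisN q ℓ ∣ -(M * e ℓ) + M * e (ℓ + 1) by
      rw [neg_add_eq_sub, ← mul_sub]; exact (heisN_dvd_sub_succ hq hinj he ℓ).mul_left M,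
      by simp, by simp⟩
  refine ⟨coherentTranslation _ hγ, coherentTranslation_mem_profiniteClosure _ hγ,
    fun x hx => Subtype.ext <| funext fun ℓ => ?_, ofHeisenberg q ⟨0, heisN q L, 0⟩,
    ofHeisenberg_mem_cyl ⟨dvd_zero _, dvd_rfl, dvd_zero _⟩, fun hfix => ?_⟩
  · obtain ⟨k, hk, hxk⟩ := exists_coord_eq_mk_mem_of_mem_cyl hx ℓ
    rw [coherentTranslation_coord, hxk, QuotientGroup.smul_mk_eq_self_iff,
      Heisenberg.inv_mul_mk_mul]
    refine ⟨(heisM_dvd_heisM_mul_heisMTail q (L + 1) ℓ).trans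
      (mul_dvd_mul_left M ((dvd_pow_self _ two_ne_zero).trans (he ℓ).2)), dvd_zero _, ?_⟩
    exact (heisN_dvd_heisN_mul_heisMTail_sq q (L + 1) ℓ).trans
      ((mul_dvd_mul hk.2.1 (he ℓ).2).trans ⟨M, by ring⟩)
  · have := congrArg (fun x : XinfH q => x.1 (L + 1)) hfix
    rw [coherentTranslation_coord, ofHeisenberg_coord, QuotientGroup.smul_mk_eq_self_iff,
      Heisenberg.inv_mul_mk_mul] at this
    exact not_heisN_dvd_heisM_mul hq hinj (Nat.lt_succ_self L) (he (L + 1)).1 this.2.2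

end XinfH

/-- For an infinite sequence of distinct primes `q`, the chain of
subgroups `H_ℓ = {(a M_ℓ, b N_ℓ, c N_ℓ)}` of the integer Heisenberg group is a strictly
nested chain of finite-index subgroups with trivial intersection, the normal core of
`H_ℓ` is `C_ℓ = {(a N_ℓ, b N_ℓ, c N_ℓ)}`, and the natural left action of the Heisenberg
group on the inverse limit `X_∞ = lim← H/H_ℓ` is a minimal equicontinuous Cantor action
which is topologically free and wild. -/
theorem heisenberg_chain_action_topFree_wild (q : ℕ → ℕ)
    (hq : ∀ i, Nat.Prime (q i)) (hinj : Function.Injective q) :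
    (∀ ℓ, (heisSub q ℓ).FiniteIndex) ∧
    (∀ ℓ, heisSub q (ℓ + 1) ≤ heisSub q ℓ) ∧
    (⨅ ℓ, heisSub q ℓ) = ⊥ ∧
    (∀ ℓ, (heisSub q ℓ).normalCore = heisCore q ℓ) ∧
    (Nonempty (XinfH q) ∧ TotallyDisconnectedSpace (XinfH q) ∧
      Perfect (Set.univ : Set (XinfH q))) ∧
    IsMinimalAction (heisAct q) ∧ IsEquicontinuousAction (heisAct q) ∧
    IsTopologicallyFree (heisAct q) ∧
    (letI : CompactSpace (XinfH q) := xinfH_compactSpace q fun i => (hq i).pos.ne'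
     ¬ IsStableAction (heisAct q)) := by
  have hq2 : ∀ i, 2 ≤ q i := fun i => (hq i).two_le
  have := xinfH_compactSpace q fun i => (hq i).ne_zero
  refine ⟨fun ℓ => ?_, heisSub_antitone q, iInf_heisSub_eq_bot hq2, normalCore_heisSub q,
    ⟨⟨XinfH.ofHeisenberg q 1⟩, inferInstance, XinfH.perfect_univ hq2⟩,
    XinfH.isMinimalAction_heisAct, XinfH.isEquicontinuousAction_heisAct,
    XinfH.isTopologicallyFree_heisAct hq2, ?_⟩
  · have := heisQuot_finite (fun i => (hq i).ne_zero) ℓ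
    exact Subgroup.finiteIndex_of_finite_quotient
  · refine XinfH.not_isLocallyQuasiAnalytic_of_forall_exists _ fun L => ?_
    obtain ⟨g, hg, hfix, hmove⟩ := XinfH.exists_fixing_cyl_succ_not_fixing_cyl hq hinj L
    exact ⟨L + 1, L.le_succ, ⟨g, hg⟩, hfix, hmove⟩
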